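/- Let σ = (∂ₓ + e^h ∂_y)·∂ₓ·∂_y be a hyperbolic symbol and let ∇ be the torsion-free connection with Christoffel symbols Γ¹₁₁ = hₓ, Γ²₂₂ = −h_y (others zero). Then d_∇σ = ω ⊗ σ for some 1-form ω, i.e. ∇ is a Chern connection for σ, and its curvature 2-form is Ω = −3 h_{xy} dx∧dy up to the identification of the curvature endomorphism with a scalar multiple of the identity. -/

import Mathlib

noncomputable section

/-- partial derivative in the first variable -/
def px (f : ℝ → ℝ → ℝ) : ℝ → ℝ → ℝ := fun x y => deriv (fun t => f t y) x

/-- partial derivative in the second variable -/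
def py (f : ℝ → ℝ → ℝ) : ℝ → ℝ → ℝ := fun x y => deriv (fun t => f x t) y

/-- partial derivative in direction `l` (`0 ↔ x`, `1 ↔ y`) -/
def pd (l : Fin 2) (f : ℝ → ℝ → ℝ) : ℝ → ℝ → ℝ := if l = 0 then px f else py f

/-- Components of the hyperbolic symbol `σ = (∂ₓ + e^h∂_y)·∂ₓ·∂_y`
(the cubic `p²q + e^h pq²`): `σ^{112} = 1/3`, `σ^{122} = e^h/3`, others 0. -/
def chSymb (h : ℝ → ℝ → ℝ) (i j k : Fin 2) : ℝ → ℝ → ℝ := fun x y =>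
  match i.val + j.val + k.val with
  | 1 => 1 / 3
  | 2 => Real.exp (h x y) / 3
  | _ => 0

/-- The Chern connection of the hyperbolic normal form:
`Γ¹₁₁ = hₓ`, `Γ²₂₂ = −h_y`, all others zero. -/
def chernΓ (h : ℝ → ℝ → ℝ) (u l m : Fin 2) : ℝ → ℝ → ℝ := fun x y =>
  if u = 0 ∧ l = 0 ∧ m = 0 then px h x y
  else if u = 1 ∧ l = 1 ∧ m = 1 then -(py h x y)
  else 0

section Aux

variable {h : ℝ → ℝ → ℝ}

/-- The partial derivative in `x` as an honest `HasDerivAt`. -/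
theorem stmt14_hpx (hh : ContDiff ℝ (⊤ : ℕ∞) (Function.uncurry h)) (x y : ℝ) :
    HasDerivAt (fun t => h t y) (px h x y) x := by
  have h1 : HasDerivAt (fun t : ℝ => (t, y)) ((1:ℝ), (0:ℝ)) x :=
    (hasDerivAt_id x).prodMk (hasDerivAt_const x y)
  exact (((hh.differentiable (by simp) (x, y)).hasFDerivAt).comp_hasDerivAt x
    h1).differentiableAt.hasDerivAt

/-- The partial derivative in `y` as an honest `HasDerivAt`. -/
theorem stmt14_hpy (hh : ContDiff ℝ (⊤ : ℕ∞) (Function.uncurry h)) (x y : ℝ) :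
    HasDerivAt (fun t => h x t) (py h x y) y := by
  have h1 : HasDerivAt (fun t : ℝ => (x, t)) ((0:ℝ), (1:ℝ)) y :=
    (hasDerivAt_const y x).prodMk (hasDerivAt_id y)
  exact (((hh.differentiable (by simp) (x, y)).hasFDerivAt).comp_hasDerivAt y
    h1).differentiableAt.hasDerivAt

theorem stmt14_dexpx (hh : ContDiff ℝ (⊤ : ℕ∞) (Function.uncurry h)) (x y : ℝ) :
    deriv (fun t => Real.exp (h t y) / 3) x = Real.exp (h x y) * px h x y / 3 :=
  ((stmt14_hpx hh x y).exp.div_const 3).deriv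

theorem stmt14_dexpy (hh : ContDiff ℝ (⊤ : ℕ∞) (Function.uncurry h)) (x y : ℝ) :
    deriv (fun t => Real.exp (h x t) / 3) y = Real.exp (h x y) * py h x y / 3 :=
  ((stmt14_hpy hh x y).exp.div_const 3).deriv

/-- Clairaut / Schwarz: mixed partial derivatives of a smooth function commute. -/
theorem stmt14_clairaut (hh : ContDiff ℝ (⊤ : ℕ∞) (Function.uncurry h)) (x y : ℝ) :
    py (px h) x y = px (py h) x y := by
  set F := Function.uncurry h with hF
  have hFd : ∀ p, HasFDerivAt F (fderiv ℝ F p) p := fun p =>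
    (hh.differentiable (by simp) p).hasFDerivAt
  have hF' : ContDiff ℝ (⊤ : ℕ∞) (fderiv ℝ F) := hh.fderiv_right (by simp)
  have hF'd : ∀ p : ℝ × ℝ, HasFDerivAt (fderiv ℝ F) (fderiv ℝ (fderiv ℝ F) p) p :=
    fun p => (hF'.differentiable (by simp) p).hasFDerivAt
  have symm : ∀ (v w : ℝ × ℝ), fderiv ℝ (fderiv ℝ F) (x, y) v w
      = fderiv ℝ (fderiv ℝ F) (x, y) w v :=
    fun v w => second_derivative_symmetric hFd (hF'd (x, y)) v w
  have e1 : ∀ x y, px h x y = fderiv ℝ F (x, y) (1, 0) := fun x y => by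
    have h1 : HasDerivAt (fun t : ℝ => (t, y)) ((1:ℝ), (0:ℝ)) x :=
      (hasDerivAt_id x).prodMk (hasDerivAt_const x y)
    exact ((hFd (x, y)).comp_hasDerivAt x h1).deriv
  have e2 : ∀ x y, py h x y = fderiv ℝ F (x, y) (0, 1) := fun x y => by
    have h1 : HasDerivAt (fun t : ℝ => (x, t)) ((0:ℝ), (1:ℝ)) y :=
      (hasDerivAt_const y x).prodMk (hasDerivAt_id y)
    exact ((hFd (x, y)).comp_hasDerivAt y h1).deriv
  have c1 : HasDerivAt (fun t : ℝ => fderiv ℝ F (t, y))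
      (fderiv ℝ (fderiv ℝ F) (x, y) (1, 0)) x := by
    have h1 : HasDerivAt (fun t : ℝ => (t, y)) ((1:ℝ), (0:ℝ)) x :=
      (hasDerivAt_id x).prodMk (hasDerivAt_const x y)
    exact (hF'd (x, y)).comp_hasDerivAt x h1
  have c2 : HasDerivAt (fun t : ℝ => fderiv ℝ F (x, t))
      (fderiv ℝ (fderiv ℝ F) (x, y) (0, 1)) y := by
    have h1 : HasDerivAt (fun t : ℝ => (x, t)) ((0:ℝ), (1:ℝ)) y :=
      (hasDerivAt_const y x).prodMk (hasDerivAt_id y)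
    exact (hF'd (x, y)).comp_hasDerivAt y h1
  have d1 : px (py h) x y = fderiv ℝ (fderiv ℝ F) (x, y) (1, 0) (0, 1) := by
    have key : HasDerivAt (fun t : ℝ => fderiv ℝ F (t, y) (0, 1))
        (fderiv ℝ (fderiv ℝ F) (x, y) (1, 0) (0, 1)) x := by
      have := c1.clm_apply (hasDerivAt_const x ((0:ℝ), (1:ℝ)))
      simpa using this
    simp only [← e2] at key
    exact key.deriv
  have d2 : py (px h) x y = fderiv ℝ (fderiv ℝ F) (x, y) (0, 1) (1, 0) := by
    have key : HasDerivAt (fun t : ℝ => fderiv ℝ F (x, t) (1, 0))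
        (fderiv ℝ (fderiv ℝ F) (x, y) (0, 1) (1, 0)) y := by
      have := c2.clm_apply (hasDerivAt_const y ((1:ℝ), (0:ℝ)))
      simpa using this
    simp only [← e1] at key
    exact key.deriv
  rw [d1, d2, symm]

end Aux

/-- For `σ = (∂ₓ + e^h∂_y)·∂ₓ·∂_y` and the torsion-free
connection with `Γ¹₁₁ = hₓ`, `Γ²₂₂ = −h_y` (others zero), there is a 1-form
`ω = ω₁dx + ω₂dy` with `d_∇σ = ω ⊗ σ` (so `∇` is a Chern connection for `σ`);
its curvature endomorphism is a scalar multiple of the identity, and the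
curvature 2-form `Ω = dω = −3h_{xy} dx∧dy`. -/
theorem stmt14 (h : ℝ → ℝ → ℝ) (hh : ContDiff ℝ (⊤ : ℕ∞) (Function.uncurry h)) :
    ∃ ω1 ω2 : ℝ → ℝ → ℝ,
      (∀ (l i j k : Fin 2) (x y : ℝ),
        pd l (chSymb h i j k) x y +
            ∑ m : Fin 2, (chernΓ h i l m x y * chSymb h m j k x y +
              chernΓ h j l m x y * chSymb h i m k x y +
              chernΓ h k l m x y * chSymb h i j m x y)
          = (if l = 0 then ω1 x y else ω2 x y) * chSymb h i j k x y) ∧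
      (∀ x y : ℝ, px ω2 x y - py ω1 x y = -3 * px (py h) x y) ∧
      (∃ c : ℝ → ℝ → ℝ, ∀ (k l : Fin 2) (x y : ℝ),
        pd 0 (chernΓ h k 1 l) x y - pd 1 (chernΓ h k 0 l) x y +
            ∑ m : Fin 2, (chernΓ h k 0 m x y * chernΓ h m 1 l x y -
              chernΓ h k 1 m x y * chernΓ h m 0 l x y)
          = if k = l then c x y else 0) := by
  refine ⟨fun x y => 2 * px h x y, fun x y => -(py h x y), ?_, ?_, ?_⟩
  · intro l i j k x y
    fin_cases l <;> fin_cases i <;> fin_cases j <;> fin_cases k <;>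
      simp [pd, px, py, chSymb, chernΓ, Fin.sum_univ_two, stmt14_dexpx hh,
        stmt14_dexpy hh] <;> ring
  · intro x y
    have e1 : px (fun x y => -(py h x y)) x y = -(px (py h) x y) := by
      simp [px, deriv.neg]
    have e2 : py (fun x y => 2 * px h x y) x y = 2 * py (px h) x y := by
      simp [py, deriv_const_mul_field]
    rw [e1, e2, stmt14_clairaut hh]
    ring
  · refine ⟨fun x y => -(px (py h) x y), ?_⟩
    intro k l x y
    have cl := stmt14_clairaut hh x y
    fin_cases k <;> fin_cases l <;>
      simp [pd, px, py, chernΓ, Fin.sum_univ_two, deriv.neg] <;>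
      simp [px, py] at cl ⊢ <;> linarith
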